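/- For each dimension d ≥ 1 there exist γ_0 > 0 and δ_0 > 0 with the following property. Let R > 0, τ > 0, δ ∈ (0, δ_0], and let f: B_{2R} → ℂ be measurable with |{(x,y) ∈ B_R × B_R : |f(x) + f(y) − f(x+y)| > τ}| < δ|B_R|^2. Then for every (x,y) ∈ B_{R/2} × B_{R/2} such that x, y, and x+y are each γ_0-rich (for f, τ, R), one has |f(x+y) − f(x) − f(y)| < 5τ. -/

import Mathlib

open MeasureTheory Filter Metric Set
noncomputable section

/-- ℝ^d as Euclidean space. -/
abbrev Ed (d : ℕ) := EuclideanSpace ℝ (Fin d)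

/-- x is γ-rich (for f, τ, R): for all y ∈ B_R outside a set of measure γ|B_R|,
|f(x+y) − f(x) − f(y)| ≤ τ. -/
def Rich {d : ℕ} (f : Ed d → ℂ) (τ R γ : ℝ) (x : Ed d) : Prop :=
  (volume {y : Ed d | y ∈ ball 0 R ∧ ¬ (‖f (x + y) - f x - f y‖ ≤ τ)}).toReal ≤
    γ * (volume (ball (0 : Ed d) R)).toReal


/-!
With `γ₀ = 2⁻ᵈ / 4` the exceptional sets of the rich points `x`, `y`, `x + y` (the one of `y`
translated by `-x`) together have measure at most `3/4 · |B_{R/2}|`, so some `z ∈ B_{R/2}` avoids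
all of them. The Cauchy difference at `(x, y)` telescopes through `z` into the Cauchy differences
at `(x, z)`, `(y, x + z)` and `(x + y, z)`, each of norm at most `τ`.
-/

open scoped ENNReal
open Module

section CauchyDiff

variable {G F : Type*} [AddCommGroup G]

def cauchyDiff [AddCommGroup F] (f : G → F) (x y : G) : F :=
  f (x + y) - f x - f y

theorem cauchyDiff_eq_add_sub [AddCommGroup F] (f : G → F) (x y z : G) :
    cauchyDiff f x y = cauchyDiff f x z + cauchyDiff f y (x + z) - cauchyDiff f (x + y) z := by
  simp only [cauchyDiff, show y + (x + z) = x + y + z by abel]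
  abel

theorem norm_cauchyDiff_le [SeminormedAddCommGroup F] (f : G → F) (x y z : G) :
    ‖cauchyDiff f x y‖ ≤
      ‖cauchyDiff f x z‖ + ‖cauchyDiff f y (x + z)‖ + ‖cauchyDiff f (x + y) z‖ := by
  rw [cauchyDiff_eq_add_sub f x y z]
  exact (norm_sub_le _ _).trans (add_le_add_left (norm_add_le _ _) _)

end CauchyDiff

section DefectSet

variable {E F : Type*} [SeminormedAddCommGroup E] [SeminormedAddCommGroup F]

def defectSet (f : E → F) (τ R : ℝ) (x : E) : Set E :=
  {y | y ∈ ball 0 R ∧ ¬ ‖cauchyDiff f x y‖ ≤ τ}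

theorem norm_cauchyDiff_le_of_measure_lt [MeasurableSpace E] [MeasurableAdd E] {μ : Measure E}
    [μ.IsAddLeftInvariant] {f : E → F} {τ R : ℝ} {x y : E} (hx : x ∈ ball 0 (R / 2))
    (h : μ (defectSet f τ R x) + μ (defectSet f τ R y) + μ (defectSet f τ R (x + y)) <
      μ (ball 0 (R / 2))) :
    ‖cauchyDiff f x y‖ ≤ 3 * τ := by
  set S := defectSet f τ R x ∪ (x + ·) ⁻¹' defectSet f τ R y ∪ defectSet f τ R (x + y)
  have hS : μ S < μ (ball 0 (R / 2)) := by
    refine (measure_union_le _ _).trans_lt (lt_of_le_of_lt ?_ h)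
    gcongr
    exact (measure_union_le _ _).trans_eq (by rw [measure_preimage_add])
  obtain ⟨z, hz, hzS⟩ : (ball 0 (R / 2) \ S).Nonempty :=
    sdiff_nonempty.2 fun hsub ↦ (measure_mono hsub).not_gt hS
  rw [mem_ball_zero_iff] at hx hz
  have hzR : z ∈ ball 0 R := mem_ball_zero_iff.2 (by linarith [norm_nonneg x])
  have hxzR : x + z ∈ ball 0 R := mem_ball_zero_iff.2 (by linarith [norm_add_le x z])
  simp only [S, defectSet, mem_union, mem_preimage, mem_ofPred_eq, not_or, not_and, not_not]
    at hzS
  obtain ⟨⟨hxz, hyxz⟩, hxyz⟩ := hzS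
  linarith [norm_cauchyDiff_le f x y z, hxz hzR, hyxz hxzR, hxyz hzR]

end DefectSet

theorem measure_ball_half {E : Type*} [NormedAddCommGroup E] [NormedSpace ℝ E]
    [MeasurableSpace E] [BorelSpace E] [FiniteDimensional ℝ E] (μ : Measure E)
    [μ.IsAddHaarMeasure] (R : ℝ) :
    μ (ball 0 (R / 2)) = ENNReal.ofReal ((1 / 2) ^ finrank ℝ E) * μ (ball 0 R) := by
  rw [← Measure.addHaar_ball_mul_of_pos μ 0 one_half_pos, one_div_mul_eq_div]

theorem Rich.measure_defectSet_le {d : ℕ} {f : Ed d → ℂ} {τ R γ : ℝ} {x : Ed d}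
    (h : Rich f τ R γ x) (hγ : 0 ≤ γ) :
    volume (defectSet f τ R x) ≤ ENNReal.ofReal γ * volume (ball (0 : Ed d) R) := by
  have hfin : volume (defectSet f τ R x) ≠ ∞ :=
    ((measure_mono fun _ hy ↦ hy.1).trans_lt measure_ball_lt_top).ne
  rw [← ENNReal.ofReal_toReal hfin, ← ENNReal.ofReal_toReal (measure_ball_lt_top.ne),
    ← ENNReal.ofReal_mul hγ]
  exact ENNReal.ofReal_le_ofReal h

theorem rich_points_nearly_additive_general (d : ℕ) :
    ∃ γ₀ δ₀ : ℝ, 0 < γ₀ ∧ 0 < δ₀ ∧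
      ∀ R τ δ : ℝ, 0 < R → 0 < τ → 0 < δ → δ ≤ δ₀ → ∀ f : Ed d → ℂ, Measurable f →
        (volume {z : Ed d × Ed d | z.1 ∈ ball 0 R ∧ z.2 ∈ ball 0 R ∧
            τ < ‖f z.1 + f z.2 - f (z.1 + z.2)‖}).toReal <
          δ * ((volume (ball (0 : Ed d) R)).toReal)^2 →
        ∀ x y : Ed d, x ∈ ball 0 (R/2) → y ∈ ball 0 (R/2) →
          Rich f τ R γ₀ x → Rich f τ R γ₀ y → Rich f τ R γ₀ (x + y) →
          ‖f (x + y) - f x - f y‖ < 5 * τ := by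
  set γ₀ : ℝ := (1 / 2) ^ d / 4 with hγ₀_def
  have hγ₀ : 0 < γ₀ := by positivity
  refine ⟨γ₀, 1, hγ₀, one_pos, ?_⟩
  intro R τ δ hR hτ _ _ f _ _ x y hx _ hrx hry hrxy
  refine (norm_cauchyDiff_le_of_measure_lt (μ := volume) (τ := τ) hx ?_).trans_lt (by linarith)
  have hB : volume (ball (0 : Ed d) R) ≠ 0 := (measure_ball_pos volume 0 hR).ne'
  set B := volume (ball (0 : Ed d) R)
  calc _ ≤ ENNReal.ofReal γ₀ * B + ENNReal.ofReal γ₀ * B + ENNReal.ofReal γ₀ * B := by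
        gcongr
        exacts [hrx.measure_defectSet_le hγ₀.le, hry.measure_defectSet_le hγ₀.le,
          hrxy.measure_defectSet_le hγ₀.le]
    _ = ENNReal.ofReal (3 * γ₀) * B := by
        rw [ENNReal.ofReal_mul zero_le_three, ENNReal.ofReal_ofNat]
        ring
    _ < ENNReal.ofReal ((1 / 2) ^ d) * B := by
        gcongr
        · exact measure_ball_lt_top.ne
        · exact (ENNReal.ofReal_lt_ofReal_iff (by positivity)).2 (by rw [hγ₀_def]; linarith)
    _ = volume (ball (0 : Ed d) (R / 2)) := by
        rw [measure_ball_half, finrank_euclideanSpace_fin]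

theorem rich_points_nearly_additive (d : ℕ) (hd : 1 ≤ d) :
    ∃ γ₀ δ₀ : ℝ, 0 < γ₀ ∧ 0 < δ₀ ∧
      ∀ R τ δ : ℝ, 0 < R → 0 < τ → 0 < δ → δ ≤ δ₀ → ∀ f : Ed d → ℂ, Measurable f →
        (volume {z : Ed d × Ed d | z.1 ∈ ball 0 R ∧ z.2 ∈ ball 0 R ∧
            τ < ‖f z.1 + f z.2 - f (z.1 + z.2)‖}).toReal <
          δ * ((volume (ball (0 : Ed d) R)).toReal)^2 →
        ∀ x y : Ed d, x ∈ ball 0 (R/2) → y ∈ ball 0 (R/2) →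
          Rich f τ R γ₀ x → Rich f τ R γ₀ y → Rich f τ R γ₀ (x + y) →
          ‖f (x + y) - f x - f y‖ < 5 * τ :=
  rich_points_nearly_additive_general d
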